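/- arXiv:2410.16479 — 3 statements merged into one kernel-verified Lean document; each statement's English description precedes it below -/
import Mathlib

section
/- S_R(ω) can be rewritten as S_R(ω) = (√(2Γ))⁻¹ · (Γ² + [M,Γ] − M² − ω²I) · Inv(ω) · √(2Γ), where [M,Γ] = MΓ−ΓM and Inv(ω) = (ω²I+(Γ−M)²)⁻¹. -/
/-!
Write `B = Γ - M`. The two resolvents multiply to `(iω + B)(-iω + B) = ω² + B²`, so `Inv` is a genuine
inverse, and `√(2Γ)² = 2Γ` turns `√(2Γ) B Inv √(2Γ) - 1` into `√(2Γ)⁻¹ (2ΓB - (ω² + B²)) Inv √(2Γ)`.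
Expanding `2ΓB - B²` with `B = Γ - M` gives `Γ² + [M, Γ] - M²`.
-/

open Matrix

/-- Entrywise positive square root of the diagonal matrix `2Γ`, as a complex matrix. -/
noncomputable def sqrtTwoGamma (n : ℕ) (γ : Fin n → ℝ) : Matrix (Fin n) (Fin n) ℂ :=
  Matrix.diagonal (fun i => (Real.sqrt (2 * γ i) : ℂ))

lemma smul_one_add_mul_smul_one_add {A : Type*} [Ring A] [Algebra ℂ A] (c d : ℂ) (B : A) :
    (c • (1 : A) + B) * (d • 1 + B) = (c * d) • 1 + (c + d) • B + B ^ 2 := by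
  simp only [add_mul, mul_add, smul_mul_assoc, mul_smul_comm, one_mul, mul_one, smul_add,
    smul_smul, pow_two, add_smul]
  rw [mul_comm d c]
  abel

lemma isUnit_sq_add_smul_one_of_isUnit {A : Type*} [Ring A] [Algebra ℂ A] (B : A) (ω : ℝ)
    (hplus : IsUnit ((Complex.I * ω) • (1 : A) + B))
    (hminus : IsUnit ((Complex.I * (-ω : ℝ)) • (1 : A) + B)) :
    IsUnit ((ω ^ 2 : ℂ) • (1 : A) + B ^ 2) := by
  have hprod : (Complex.I * ω) * (Complex.I * (-ω : ℝ)) = (ω ^ 2 : ℂ) := by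
    push_cast
    linear_combination (-(ω : ℂ) ^ 2) * Complex.I_sq
  have hsum : (Complex.I * ω) + (Complex.I * (-ω : ℝ)) = 0 := by push_cast; ring
  simpa only [smul_one_add_mul_smul_one_add, hprod, hsum, zero_smul, add_zero] using hplus.mul hminus

lemma two_smul_mul_sub_sq_sub {R : Type*} [Ring R] [Algebra ℂ R] (D m : R) (c : ℂ) :
    (2 : ℂ) • D * (D - m) - (c • 1 + (D - m) ^ 2) = D ^ 2 + (m * D - D * m) - m ^ 2 - c • 1 := by
  rw [two_smul, ← Algebra.algebraMap_eq_smul_one]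
  noncomm_ring

lemma sqrtTwoGamma_mul_self {n : ℕ} {γ : Fin n → ℝ} (hγ : ∀ i, 0 ≤ γ i) :
    sqrtTwoGamma n γ * sqrtTwoGamma n γ = (2 : ℂ) • (diagonal γ).map Complex.ofReal := by
  rw [sqrtTwoGamma, diagonal_mul_diagonal, diagonal_map Complex.ofReal_zero, ← diagonal_smul]
  congr 1
  ext i
  rw [← Complex.ofReal_mul, Real.mul_self_sqrt (by linarith [hγ i])]
  simp

lemma isUnit_det_sqrtTwoGamma {n : ℕ} {γ : Fin n → ℝ} (hγ : ∀ i, 0 < γ i) :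
    IsUnit (sqrtTwoGamma n γ).det := by
  rw [sqrtTwoGamma, det_diagonal, isUnit_iff_ne_zero, Finset.prod_ne_zero_iff]
  intro i _
  exact Complex.ofReal_ne_zero.mpr (Real.sqrt_ne_zero'.mpr (by linarith [hγ i]))

lemma inv_mul_mul_self_mul_sub_mul_inv_mul {n : Type*} [Fintype n] [DecidableEq n]
    {K : Type*} [CommRing K] {s B A : Matrix n n K} (hs : IsUnit s.det) (hA : IsUnit A.det) :
    s⁻¹ * ((s * s * B - A) * A⁻¹) * s = s * (B * A⁻¹) * s - 1 := by
  rw [sub_mul, mul_nonsing_inv A hA, mul_sub, sub_mul, mul_one, nonsing_inv_mul s hs]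
  simp only [← mul_assoc]
  rw [nonsing_inv_mul s hs, one_mul]

theorem stmt3 (N : ℕ) (γ : Fin (2*N) → ℝ) (hγ : ∀ i, 0 < γ i)
    (M : Matrix (Fin (2*N)) (Fin (2*N)) ℝ) (ω : ℝ)
    (h1 : IsUnit ((Complex.I * ω) • (1 : Matrix (Fin (2*N)) (Fin (2*N)) ℂ)
            + (Matrix.diagonal γ - M).map Complex.ofReal))
    (h2 : IsUnit ((Complex.I * (-ω : ℝ)) • (1 : Matrix (Fin (2*N)) (Fin (2*N)) ℂ)
            + (Matrix.diagonal γ - M).map Complex.ofReal))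
    (Inv SR : Matrix (Fin (2*N)) (Fin (2*N)) ℂ)
    (hInv : Inv = ((ω^2 : ℂ) • (1 : Matrix (Fin (2*N)) (Fin (2*N)) ℂ)
            + ((Matrix.diagonal γ - M).map Complex.ofReal)^2)⁻¹)
    (hSR : SR = sqrtTwoGamma (2*N) γ * ((Matrix.diagonal γ - M).map Complex.ofReal * Inv)
            * sqrtTwoGamma (2*N) γ - 1) :
    SR = (sqrtTwoGamma (2*N) γ)⁻¹
        * ((((Matrix.diagonal γ).map Complex.ofReal)^2
            + ((M.map Complex.ofReal) * ((Matrix.diagonal γ).map Complex.ofReal)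
              - ((Matrix.diagonal γ).map Complex.ofReal) * (M.map Complex.ofReal))
            - (M.map Complex.ofReal)^2
            - (ω^2 : ℂ) • (1 : Matrix (Fin (2*N)) (Fin (2*N)) ℂ)) * Inv)
        * sqrtTwoGamma (2*N) γ := by
  have hA := (isUnit_iff_isUnit_det _).mp (isUnit_sq_add_smul_one_of_isUnit _ ω h1 h2)
  rw [hSR, hInv, ← inv_mul_mul_self_mul_sub_mul_inv_mul (isUnit_det_sqrtTwoGamma hγ) hA,
    sqrtTwoGamma_mul_self fun i => (hγ i).le, Matrix.map_sub _ fun a b => Complex.ofReal_sub a b,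
    two_smul_mul_sub_sq_sub]
end

section
/- With A(ω) := Γ² + [M,Γ] − M² − ω²I and B(ω) := Inv(ω)ΓInv(ω)ᵀ, the difference S_R(ω)S_I(ω)ᵀ − S_I(ω)S_R(ω)ᵀ equals −4ω·(√(2Γ))⁻¹·(A(ω)B(ω)Γ − ΓB(ω)A(ω)ᵀ)·(√(2Γ))⁻¹. In particular, S_R(ω)S_I(ω)ᵀ is symmetric if and only if A(ω)B(ω)Γ = ΓB(ω)A(ω)ᵀ. -/
/-!
Write `S = √(2Γ)`, a symmetric invertible matrix with `S * S = 2Γ`, so that `S = 2Γ S⁻¹`.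
Then `S_R S_Iᵀ = -ω S⁻¹ A Inv (S S) Invᵀ S = -4ω S⁻¹ (A B Γ) S⁻¹`, and `S_I S_Rᵀ` is its transpose,
which is the same expression with `A B Γ` replaced by `(A B Γ)ᵀ = Γ B Aᵀ` because `Γ` and `B` are
symmetric. Since `S⁻¹` is invertible and `ω ≠ 0`, the difference vanishes exactly when
`A B Γ = Γ B Aᵀ`.
-/

open Matrix

namespace Matrix

variable {n R : Type*} [Fintype n] [DecidableEq n] [CommRing R]

theorem diagonal_sqrt_mul_self {d : n → ℝ} (hd : ∀ i, 0 ≤ d i) :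
    diagonal (fun i => √(d i)) * diagonal (fun i => √(d i)) = diagonal d := by
  rw [diagonal_mul_diagonal]
  exact congrArg diagonal (funext fun i => Real.mul_self_sqrt (hd i))

theorem isUnit_det_diagonal_sqrt {d : n → ℝ} (hd : ∀ i, 0 < d i) :
    IsUnit (diagonal (fun i => √(d i))).det := by
  rw [det_diagonal]
  exact (Finset.prod_pos fun i _ => Real.sqrt_pos.mpr (hd i)).ne'.isUnit

theorem nonsing_inv_mul_mul_mul_transpose {S P Q : Matrix n n R} (hS : IsUnit S.det)
    (hST : Sᵀ = S) :
    S⁻¹ * P * S * (S * Q * S)ᵀ = S⁻¹ * (P * (S * S) * Qᵀ * (S * S)) * S⁻¹ := by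
  calc S⁻¹ * P * S * (S * Q * S)ᵀ = S⁻¹ * P * (S * S) * Qᵀ * S := by
        simp only [transpose_mul, hST, Matrix.mul_assoc]
    _ = S⁻¹ * P * (S * S) * Qᵀ * (S * S * S⁻¹) := by rw [mul_nonsing_inv_cancel_right S S hS]
    _ = S⁻¹ * (P * (S * S) * Qᵀ * (S * S)) * S⁻¹ := by simp only [Matrix.mul_assoc]

theorem transpose_conj_nonsing_inv {S X : Matrix n n R} (hST : Sᵀ = S) :
    (S⁻¹ * X * S⁻¹)ᵀ = S⁻¹ * Xᵀ * S⁻¹ := by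
  simp only [transpose_mul, transpose_nonsing_inv, hST, Matrix.mul_assoc]

theorem conj_nonsing_inv_eq_zero_iff {S X : Matrix n n R} (hS : IsUnit S.det) :
    S⁻¹ * X * S⁻¹ = 0 ↔ X = 0 := by
  have hS' : IsUnit S⁻¹ := (isUnit_iff_isUnit_det _).mpr (isUnit_nonsing_inv_det S hS)
  rw [hS'.mul_left_eq_zero, hS'.mul_right_eq_zero]

end Matrix

theorem stmt5_general (N : ℕ) (γ : Fin (2*N) → ℝ) (hγ : ∀ i, 0 < γ i)
    (ω : ℝ) (hω : ω ≠ 0)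
    (Inv A B sq2 SR SI : Matrix (Fin (2*N)) (Fin (2*N)) ℝ)
    (hB : B = Inv * Matrix.diagonal γ * Invᵀ)
    (hsq2 : sq2 = Matrix.diagonal (fun i => Real.sqrt (2 * γ i)))
    (hSR : SR = sq2⁻¹ * (A * Inv) * sq2)
    (hSI : SI = (-ω) • (sq2 * Inv * sq2)) :
    SR * SIᵀ - SI * SRᵀ
      = (-(4*ω)) • (sq2⁻¹ * (A * B * Matrix.diagonal γ - Matrix.diagonal γ * B * Aᵀ) * sq2⁻¹)
    ∧ ((SR * SIᵀ)ᵀ = SR * SIᵀ ↔ A * B * Matrix.diagonal γ = Matrix.diagonal γ * B * Aᵀ) := by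
  have h2γ : ∀ i, 0 < 2 * γ i := fun i => mul_pos two_pos (hγ i)
  have hS : IsUnit sq2.det := hsq2 ▸ isUnit_det_diagonal_sqrt h2γ
  have hST : sq2ᵀ = sq2 := by rw [hsq2, diagonal_transpose]
  have hSS : sq2 * sq2 = (2 : ℝ) • diagonal γ := by
    rw [hsq2, diagonal_sqrt_mul_self fun i => (h2γ i).le, ← diagonal_smul]; rfl
  have hABΓ : (A * B * diagonal γ)ᵀ = diagonal γ * B * Aᵀ := by
    simp only [hB, transpose_mul, transpose_transpose, diagonal_transpose, Matrix.mul_assoc]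
  have hprod : SR * SIᵀ = (-(4 * ω)) • (sq2⁻¹ * (A * B * diagonal γ) * sq2⁻¹) := by
    rw [hSR, hSI, transpose_smul, Matrix.mul_smul, nonsing_inv_mul_mul_mul_transpose hS hST, hSS, hB]
    simp only [Matrix.mul_smul, Matrix.smul_mul, smul_smul, Matrix.mul_assoc]
    norm_num [mul_comm]
  have hprodT : SI * SRᵀ = (-(4 * ω)) • (sq2⁻¹ * (diagonal γ * B * Aᵀ) * sq2⁻¹) := by
    rw [← transpose_transpose SI, ← transpose_mul, hprod, transpose_smul,
      transpose_conj_nonsing_inv hST, hABΓ]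
  have hdiff : SR * SIᵀ - SI * SRᵀ
      = (-(4 * ω)) • (sq2⁻¹ * (A * B * diagonal γ - diagonal γ * B * Aᵀ) * sq2⁻¹) := by
    rw [hprod, hprodT, ← smul_sub, ← Matrix.sub_mul, ← Matrix.mul_sub]
  refine ⟨hdiff, ?_⟩
  rw [transpose_mul, transpose_transpose, eq_comm, ← sub_eq_zero, hdiff, smul_eq_zero,
    conj_nonsing_inv_eq_zero_iff hS, sub_eq_zero]
  simp [hω]

theorem stmt5 (N : ℕ) (γ : Fin (2*N) → ℝ) (hγ : ∀ i, 0 < γ i)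
    (M : Matrix (Fin (2*N)) (Fin (2*N)) ℝ) (ω : ℝ) (hω : ω ≠ 0)
    (h1 : IsUnit ((Complex.I * ω) • (1 : Matrix (Fin (2*N)) (Fin (2*N)) ℂ)
            + (Matrix.diagonal γ - M).map Complex.ofReal))
    (h2 : IsUnit ((Complex.I * (-ω : ℝ)) • (1 : Matrix (Fin (2*N)) (Fin (2*N)) ℂ)
            + (Matrix.diagonal γ - M).map Complex.ofReal))
    (hInvUnit : IsUnit ((ω^2) • (1 : Matrix (Fin (2*N)) (Fin (2*N)) ℝ) + (Matrix.diagonal γ - M)^2))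
    (Inv A B sq2 SR SI : Matrix (Fin (2*N)) (Fin (2*N)) ℝ)
    (hInv : Inv = ((ω^2) • (1 : Matrix (Fin (2*N)) (Fin (2*N)) ℝ) + (Matrix.diagonal γ - M)^2)⁻¹)
    (hA : A = (Matrix.diagonal γ)^2
            + (M * Matrix.diagonal γ - Matrix.diagonal γ * M)
            - M^2 - (ω^2) • (1 : Matrix (Fin (2*N)) (Fin (2*N)) ℝ))
    (hB : B = Inv * Matrix.diagonal γ * Invᵀ)
    (hsq2 : sq2 = Matrix.diagonal (fun i => Real.sqrt (2 * γ i)))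
    (hSR : SR = sq2⁻¹ * (A * Inv) * sq2)
    (hSI : SI = (-ω) • (sq2 * Inv * sq2)) :
    SR * SIᵀ - SI * SRᵀ
      = (-(4*ω)) • (sq2⁻¹ * (A * B * Matrix.diagonal γ - Matrix.diagonal γ * B * Aᵀ) * sq2⁻¹)
    ∧ ((SR * SIᵀ)ᵀ = SR * SIᵀ ↔ A * B * Matrix.diagonal γ = Matrix.diagonal γ * B * Aᵀ) :=
  stmt5_general N γ hγ ω hω Inv A B sq2 SR SI hB hsq2 hSR hSI
end

section
/- If F = 0 (no pair production) and G is Hermitian, then the transfer function S(ω) = √(2Γ)(iωI + Γ − 𝓜)⁻¹√(2Γ) − I satisfies S(ω)S(−ω)ᵀ = I whenever Γ is proportional to the identity; consequently the spectral covariance σ_out(ω) = (1/(2√(2π)))S(ω)S(−ω)ᵀ is real (proportional to the identity). -/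
open Matrix

/-!
Write `R(w) = iw + γ - 𝓜` for the complexified resolvent argument. Since `G` is Hermitian, `Re G`
is symmetric and `Im G` antisymmetric, so `𝓜` is antisymmetric and `R(ω) + R(-ω)ᵀ = 2γ`.
With `B = R(ω)` and `C = R(-ω)ᵀ` this gives the Cayley-type factorisations
`2γ B⁻¹ - 1 = B⁻¹ C` and `2γ C⁻¹ - 1 = C⁻¹ B`, whose product is `1`.
-/

namespace Matrix

variable {ι : Type*}

section CayleyTransform

variable [Fintype ι] [DecidableEq ι] {R : Type*} [CommRing R] {B C : Matrix ι ι R} {c : R}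

theorem smul_inv_sub_one_eq_inv_mul (hB : IsUnit B.det) (hBC : B + C = c • 1) :
    c • B⁻¹ - 1 = B⁻¹ * C := by
  rw [eq_sub_of_add_eq' hBC, Matrix.mul_sub, Matrix.mul_smul, Matrix.mul_one,
    nonsing_inv_mul _ hB]

theorem smul_inv_sub_one_mul_smul_inv_sub_one (hB : IsUnit B.det) (hC : IsUnit C.det)
    (hBC : B + C = c • 1) : (c • B⁻¹ - 1) * (c • C⁻¹ - 1) = 1 := by
  rw [smul_inv_sub_one_eq_inv_mul hB hBC,
    smul_inv_sub_one_eq_inv_mul hC ((add_comm C B).trans hBC), Matrix.mul_assoc,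
    mul_nonsing_inv_cancel_left _ _ hC, nonsing_inv_mul _ hB]

end CayleyTransform

theorem IsHermitian.transpose_map_re {G : Matrix ι ι ℂ} (hG : G.IsHermitian) :
    (G.map Complex.re)ᵀ = G.map Complex.re := by
  ext i j
  simp [← hG.apply j i]

theorem IsHermitian.transpose_map_im {G : Matrix ι ι ℂ} (hG : G.IsHermitian) :
    (G.map Complex.im)ᵀ = -G.map Complex.im := by
  ext i j
  simp [← hG.apply j i]

theorem IsHermitian.transpose_quadratureBlocks {G : Matrix ι ι ℂ} (hG : G.IsHermitian) :
    (Matrix.fromBlocks (G.map Complex.im) (G.map Complex.re)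
        (-(G.map Complex.re)) (-((G.map Complex.im)ᵀ)))ᵀ
      = -Matrix.fromBlocks (G.map Complex.im) (G.map Complex.re)
        (-(G.map Complex.re)) (-((G.map Complex.im)ᵀ)) := by
  simp only [fromBlocks_transpose, fromBlocks_neg, transpose_neg,
    hG.transpose_map_im, hG.transpose_map_re, neg_neg]

end Matrix

section Resolvent

variable {ι : Type*} [DecidableEq ι]

noncomputable def quadratureResolvent (𝓜 : Matrix ι ι ℝ) (γ w : ℝ) : Matrix ι ι ℂ :=
  (Complex.I * w) • 1 + (γ • (1 : Matrix ι ι ℝ) - 𝓜).map Complex.ofReal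

theorem quadratureResolvent_add_transpose_neg {𝓜 : Matrix ι ι ℝ} (h𝓜 : 𝓜ᵀ = -𝓜) (γ w : ℝ) :
    quadratureResolvent 𝓜 γ w + (quadratureResolvent 𝓜 γ (-w))ᵀ
      = ((2 * γ : ℝ) : ℂ) • 1 := by
  have hmap : ((γ • (1 : Matrix ι ι ℝ) - 𝓜).map Complex.ofReal)ᵀ
      = (γ • (1 : Matrix ι ι ℝ) + 𝓜).map Complex.ofReal := by
    rw [← transpose_map, transpose_sub, transpose_smul, transpose_one, h𝓜, sub_neg_eq_add]
  rw [quadratureResolvent, quadratureResolvent, transpose_add, transpose_smul, transpose_one,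
    hmap]
  ext i j
  by_cases hij : i = j <;> simp [hij, one_apply]; ring

end Resolvent

theorem sqrt_smul_one_mul_mul_sqrt_smul_one {ι : Type*} [Fintype ι] [DecidableEq ι]
    {c : ℝ} (hc : 0 ≤ c) (X : Matrix ι ι ℂ) :
    ((Real.sqrt c : ℂ) • (1 : Matrix ι ι ℂ)) * X * ((Real.sqrt c : ℂ) • (1 : Matrix ι ι ℂ))
      = (c : ℂ) • X := by
  rw [Matrix.smul_mul, Matrix.one_mul, Matrix.mul_smul, Matrix.mul_one, smul_smul,
    ← Complex.ofReal_mul, Real.mul_self_sqrt hc]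

theorem stmt16 (N : ℕ) (G : Matrix (Fin N) (Fin N) ℂ) (hG : Gᴴ = G)
    (𝓜 : Matrix (Fin N ⊕ Fin N) (Fin N ⊕ Fin N) ℝ)
    (h𝓜 : 𝓜 = Matrix.fromBlocks (G.map Complex.im) (G.map Complex.re)
            (-(G.map Complex.re)) (-((G.map Complex.im)ᵀ)))
    (γ ω : ℝ) (hγ : 0 < γ)
    (S : ℝ → Matrix (Fin N ⊕ Fin N) (Fin N ⊕ Fin N) ℂ)
    (hS : ∀ w : ℝ, S w =
      ((Real.sqrt (2*γ) : ℂ) • (1 : Matrix (Fin N ⊕ Fin N) (Fin N ⊕ Fin N) ℂ))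
        * ((Complex.I * w) • (1 : Matrix (Fin N ⊕ Fin N) (Fin N ⊕ Fin N) ℂ)
            + ((γ • (1 : Matrix (Fin N ⊕ Fin N) (Fin N ⊕ Fin N) ℝ) - 𝓜).map Complex.ofReal))⁻¹
        * ((Real.sqrt (2*γ) : ℂ) • (1 : Matrix (Fin N ⊕ Fin N) (Fin N ⊕ Fin N) ℂ)) - 1)
    (h1 : IsUnit ((Complex.I * ω) • (1 : Matrix (Fin N ⊕ Fin N) (Fin N ⊕ Fin N) ℂ)
            + ((γ • (1 : Matrix (Fin N ⊕ Fin N) (Fin N ⊕ Fin N) ℝ) - 𝓜).map Complex.ofReal)))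
    (h2 : IsUnit ((Complex.I * (-ω : ℝ)) • (1 : Matrix (Fin N ⊕ Fin N) (Fin N ⊕ Fin N) ℂ)
            + ((γ • (1 : Matrix (Fin N ⊕ Fin N) (Fin N ⊕ Fin N) ℝ) - 𝓜).map Complex.ofReal))) :
    S ω * (S (-ω))ᵀ = 1
    ∧ (1 / (2 * Real.sqrt (2 * Real.pi)) : ℂ) • (S ω * (S (-ω))ᵀ)
      = (1 / (2 * Real.sqrt (2 * Real.pi)) : ℂ)
          • (1 : Matrix (Fin N ⊕ Fin N) (Fin N ⊕ Fin N) ℂ) := by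
  have hanti : 𝓜ᵀ = -𝓜 := h𝓜 ▸ Matrix.IsHermitian.transpose_quadratureBlocks hG
  have hS' : ∀ w : ℝ, S w = ((2 * γ : ℝ) : ℂ) • (quadratureResolvent 𝓜 γ w)⁻¹ - 1 := fun w => by
    rw [hS w, sqrt_smul_one_mul_mul_sqrt_smul_one (by positivity)]
    rfl
  have hB : IsUnit (quadratureResolvent 𝓜 γ ω).det := (isUnit_iff_isUnit_det _).mp h1
  have hC : IsUnit (quadratureResolvent 𝓜 γ (-ω))ᵀ.det := by
    rw [det_transpose]
    exact (isUnit_iff_isUnit_det _).mp h2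
  have hunitary : S ω * (S (-ω))ᵀ = 1 := by
    rw [hS' ω, hS' (-ω), transpose_sub, transpose_smul, transpose_one, transpose_nonsing_inv]
    exact smul_inv_sub_one_mul_smul_inv_sub_one hB hC
      (quadratureResolvent_add_transpose_neg hanti γ ω)
  exact ⟨hunitary, by rw [hunitary]⟩
end
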